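/- arXiv:1605.01805 — 2 statements merged into one kernel-verified Lean document; each statement's English description precedes it below -/
import Mathlib

section
/- For real numbers x ≥ y ≥ 0 and 0 < γ ≤ 1, we have (x+y)^γ ≤ x^γ + γ·y^γ. -/
open Real Set

/- Concavity of `t ↦ t ^ γ` makes its increments over a step of length `y` decrease, so
`(x + y) ^ γ - x ^ γ ≤ (2 y) ^ γ - y ^ γ`; Bernoulli's inequality `2 ^ γ ≤ 1 + γ` finishes. -/

theorem ConcaveOn.map_add_sub_map_le {𝕜 : Type*} [Field 𝕜] [LinearOrder 𝕜] [IsStrictOrderedRing 𝕜]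
    {s : Set 𝕜} {f : 𝕜 → 𝕜} (hf : ConcaveOn 𝕜 s f) {a b d : 𝕜} (ha : a ∈ s) (hbd : b + d ∈ s)
    (hab : a ≤ b) (hd : 0 ≤ d) : f (b + d) - f b ≤ f (a + d) - f a := by
  rcases (show 0 ≤ b + d - a by linarith).eq_or_lt with hL | hL
  · obtain rfl : d = 0 := by linarith
    obtain rfl : a = b := by linarith
    rfl
  have ht0 : 0 ≤ d / (b + d - a) := by positivity
  have ht1 : 0 ≤ 1 - d / (b + d - a) := by rw [sub_nonneg, div_le_one hL]; linarith
  -- `b` and `a + d` are the two convex combinations of `a` and `b + d` with swapped weights.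
  have hb_eq : d / (b + d - a) * a + (1 - d / (b + d - a)) * (b + d) = b := by
    field_simp; ring
  have had_eq : (1 - d / (b + d - a)) * a + d / (b + d - a) * (b + d) = a + d := by
    field_simp; ring
  have hb := hf.2 ha hbd ht0 ht1 (add_sub_cancel _ 1)
  have had := hf.2 ha hbd ht1 ht0 (sub_add_cancel 1 _)
  simp only [smul_eq_mul, hb_eq, had_eq] at hb had
  linarith

theorem stmt0 (x y γ : ℝ) (hy : 0 ≤ y) (hxy : y ≤ x) (hγ0 : 0 < γ) (hγ1 : γ ≤ 1) :
    (x + y) ^ γ ≤ x ^ γ + γ * y ^ γ := by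
  have hincr : (x + y) ^ γ - x ^ γ ≤ (y + y) ^ γ - y ^ γ :=
    (concaveOn_rpow hγ0.le hγ1).map_add_sub_map_le hy
      (by simp only [mem_Ici]; linarith) hxy hy
  have hdouble : (y + y) ^ γ ≤ (1 + γ) * y ^ γ := by
    rw [← two_mul, mul_rpow zero_le_two hy]
    gcongr
    simpa [one_add_one_eq_two] using
      rpow_one_add_le_one_add_mul_self (s := 1) (by norm_num) hγ0.le hγ1
  linarith
end

section
/- Let φ₁ : ℝ → ℝ be twice continuously differentiable with φ₁' bounded, and let φ_ℓ : ℝ → ℝ be twice continuously differentiable satisfying |φ_ℓ''(u)| ≤ ε·ℓ·φ₁'(u) for all u, where ε > 0 and ℓ ∈ ℕ. Then for all t, s ∈ ℝ, |φ_ℓ'(t+s) − φ_ℓ'(t)| ≤ ε·ℓ·|s|·(φ₁'(t) + (1/2)·‖φ₁''‖_∞·|s|). -/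
/-!
By the mean value theorem `φ₁'(u) ≤ φ₁'(t) + ‖φ₁''‖_∞ |u - t|`, so `|φ_ℓ''(u)| ≤ a + b |u - t|`
with `a = εℓ φ₁'(t)` and `b = εℓ ‖φ₁''‖_∞`. Comparing `φ_ℓ' - φ_ℓ'(t)` with the boundary function
`a (x - t) + b (x - t)² / 2` on `[t, t + s]` gives the bound `a |s| + b s² / 2` for `s ≥ 0`;
the case `s ≤ 0` follows by reflecting `x ↦ -x`.
-/

section

variable {E : Type*} [NormedAddCommGroup E] [NormedSpace ℝ E] {f f' : ℝ → E} {a b t : ℝ}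

theorem norm_sub_le_of_norm_deriv_le_add_mul_abs_of_nonneg (hf : ∀ x, HasDerivAt f (f' x) x)
    (bound : ∀ x, ‖f' x‖ ≤ a + b * |x - t|) {s : ℝ} (hs : 0 ≤ s) :
    ‖f (t + s) - f t‖ ≤ a * s + b / 2 * s ^ 2 := by
  have hB : ∀ x, HasDerivAt (fun x => a * (x - t) + b / 2 * (x - t) ^ 2) (a + b * (x - t)) x := by
    intro x
    have hx := (hasDerivAt_id' x).sub_const t
    exact ((hx.const_mul a).add ((hx.pow 2).const_mul (b / 2))).congr_deriv (by simp; ring)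
  have := image_norm_le_of_norm_deriv_right_le_deriv_boundary (f := fun x => f x - f t)
    (a := t) (b := t + s) (fun x _ => ((hf x).sub_const (f t)).continuousAt.continuousWithinAt)
    (fun x _ => ((hf x).sub_const (f t)).hasDerivWithinAt) (by simp) hB
    (fun x hx => by simpa [abs_of_nonneg (sub_nonneg.2 hx.1)] using bound x)
    (Set.right_mem_Icc.2 (by linarith))
  simpa using this

theorem norm_sub_le_of_norm_deriv_le_add_mul_abs (hf : ∀ x, HasDerivAt f (f' x) x)
    (bound : ∀ x, ‖f' x‖ ≤ a + b * |x - t|) (s : ℝ) :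
    ‖f (t + s) - f t‖ ≤ a * |s| + b / 2 * s ^ 2 := by
  rcases le_total 0 s with hs | hs
  · simpa [abs_of_nonneg hs] using norm_sub_le_of_norm_deriv_le_add_mul_abs_of_nonneg hf bound hs
  · have hg : ∀ x, HasDerivAt (fun x => f (-x)) (-f' (-x)) x := fun x =>
      (hf (-x)).scomp x (hasDerivAt_neg' x) |>.congr_deriv (by simp)
    have := norm_sub_le_of_norm_deriv_le_add_mul_abs_of_nonneg (t := -t) (a := a) (b := b) hg
      (fun x => by rw [norm_neg, show x - -t = -(-x - t) by ring, abs_neg]; exact bound (-x))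
      (neg_nonneg.2 hs)
    rw [abs_of_nonpos hs]
    convert this using 3 <;> simp [add_comm]

end

theorem le_add_mul_abs_sub_of_abs_deriv_le {g : ℝ → ℝ} (hg : Differentiable ℝ g) {K : ℝ}
    (hK : ∀ u, |deriv g u| ≤ K) (t u : ℝ) : g u ≤ g t + K * |u - t| := by
  have := convex_univ.norm_image_sub_le_of_norm_deriv_le (fun x _ => hg x)
    (fun x _ => (Real.norm_eq_abs _).trans_le (hK x)) (Set.mem_univ t) (Set.mem_univ u)
  rw [Real.norm_eq_abs, Real.norm_eq_abs] at this
  linarith [le_abs_self (g u - g t)]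

theorem stmt2_general (φ₁ φℓ : ℝ → ℝ) (hφ₁ : ContDiff ℝ 2 φ₁) (hφℓ : ContDiff ℝ 2 φℓ)
    (hφ₁''bdd : BddAbove (Set.range fun u => |deriv (deriv φ₁) u|))
    (ε : ℝ) (ℓ : ℕ) (hε : 0 < ε)
    (hφℓ'' : ∀ u, |deriv (deriv φℓ) u| ≤ ε * ℓ * deriv φ₁ u) :
    ∀ t s : ℝ, |deriv φℓ (t + s) - deriv φℓ t| ≤
      ε * ℓ * |s| * (deriv φ₁ t + (1 / 2) * (⨆ u, |deriv (deriv φ₁) u|) * |s|) := by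
  intro t s
  set K := ⨆ u, |deriv (deriv φ₁) u|
  have hφ₁' : ∀ u, deriv φ₁ u ≤ deriv φ₁ t + K * |u - t| :=
    le_add_mul_abs_sub_of_abs_deriv_le hφ₁.differentiable_deriv_two (le_ciSup hφ₁''bdd) t
  have hφℓ''_le : ∀ u, ‖deriv (deriv φℓ) u‖ ≤ ε * ℓ * deriv φ₁ t + ε * ℓ * K * |u - t| := by
    intro u
    have := mul_le_mul_of_nonneg_left (hφ₁' u) (by positivity : (0 : ℝ) ≤ ε * ℓ)
    rw [Real.norm_eq_abs]
    linarith [hφℓ'' u]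
  calc |deriv φℓ (t + s) - deriv φℓ t|
      ≤ ε * ℓ * deriv φ₁ t * |s| + ε * ℓ * K / 2 * s ^ 2 :=
        norm_sub_le_of_norm_deriv_le_add_mul_abs
          (fun x => (hφℓ.differentiable_deriv_two x).hasDerivAt) hφℓ''_le s
    _ = ε * ℓ * |s| * (deriv φ₁ t + (1 / 2) * K * |s|) := by rw [← sq_abs s]; ring

theorem stmt2 (φ₁ φℓ : ℝ → ℝ) (hφ₁ : ContDiff ℝ 2 φ₁) (hφℓ : ContDiff ℝ 2 φℓ)
    (hφ₁'bdd : ∃ M : ℝ, ∀ u, |deriv φ₁ u| ≤ M)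
    (hφ₁''bdd : BddAbove (Set.range fun u => |deriv (deriv φ₁) u|))
    (ε : ℝ) (ℓ : ℕ) (hε : 0 < ε)
    (hφℓ'' : ∀ u, |deriv (deriv φℓ) u| ≤ ε * ℓ * deriv φ₁ u) :
    ∀ t s : ℝ, |deriv φℓ (t + s) - deriv φℓ t| ≤
      ε * ℓ * |s| * (deriv φ₁ t + (1 / 2) * (⨆ u, |deriv (deriv φ₁) u|) * |s|) :=
  stmt2_general φ₁ φℓ hφ₁ hφℓ hφ₁''bdd ε ℓ hε hφℓ''
end
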